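/- Let 𝔉(x,z) = Σ_{i,j≥0} A_{i,j} x^i z^j be a commutative formal group over H, and define ω̃(x) = (id ⊗ ε̃)(∂𝔉(x,z)/∂z) = (id ⊗ ε)A_{0,1} + Σ_{i≥1} ((id ⊗ ε)A_{i,1}) x^i ∈ H[[x]], where ε̃ : H[[z]] → R applies ε to coefficients and sends z to 0. Then the identity (Δω̃)(𝔉(x⊗1,1⊗x)) = (∂𝔉(x⊗1,1⊗x)/∂(1⊗x)) · (1⊗ω̃)(1⊗x) holds in (H ⊗_R H)[[x⊗1, 1⊗x]], where Δω̃ denotes ω̃ with Δ applied to all its coefficients (so that (Δω̃)(𝔉) is the composition of power series, well defined since 𝔉 has zero constant term), ∂/∂(1⊗x) is the formal partial derivative with respect to the variable 1⊗x, and (1⊗ω̃)(1⊗x) denotes ω̃ with coefficients b replaced by 1⊗b evaluated in the variable 1⊗x. -/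

import Mathlib

open scoped TensorProduct

noncomputable section

namespace FGHopf

variable {A B : Type*} [CommRing A] [CommRing B] {σ : Type*}

/-- Apply a map to all coefficients of a (multivariate) power series. -/
def mapCoeffs (f : A → B) (F : MvPowerSeries σ A) : MvPowerSeries σ B :=
  fun m => f (F m)

/-- Substitution of two power series `G`, `K` into a two-variable power series `w`
(the mathematically correct substitution whenever the relevant family of coefficients
is finitely supported, e.g. when `G` and `K` have zero constant term or `w` is a
polynomial). -/
def subst2 (w : MvPowerSeries (Fin 2) A) (G K : MvPowerSeries σ A) :
    MvPowerSeries σ A :=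
  fun m => ∑ᶠ p : ℕ × ℕ,
    MvPowerSeries.coeff (R := A) (Finsupp.single 0 p.1 + Finsupp.single 1 p.2) w *
      MvPowerSeries.coeff (R := A) m (G ^ p.1 * K ^ p.2)

/-- Substitution of a power series `G` into a one-variable power series `w`. -/
def subst1 (w : PowerSeries A) (G : MvPowerSeries σ A) : MvPowerSeries σ A :=
  fun m => ∑ᶠ n : ℕ, PowerSeries.coeff (R := A) n w * MvPowerSeries.coeff (R := A) m (G ^ n)

/-- Regard a two-variable series as a three-variable series in the first two variables,
mapping its coefficients by `f`. -/
def emb12 (f : A → B) (F : MvPowerSeries (Fin 2) A) : MvPowerSeries (Fin 3) B :=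
  fun m => if m 2 = 0 then
    f (F (Finsupp.single 0 (m 0) + Finsupp.single 1 (m 1))) else 0

/-- Regard a two-variable series as a three-variable series in the last two variables,
mapping its coefficients by `f`. -/
def emb23 (f : A → B) (F : MvPowerSeries (Fin 2) A) : MvPowerSeries (Fin 3) B :=
  fun m => if m 0 = 0 then
    f (F (Finsupp.single 0 (m 1) + Finsupp.single 1 (m 2))) else 0

/-- Regard a one-variable series as a two-variable series in the first variable `x⊗1`,
mapping its coefficients by `f`. -/
def inVar0 (f : A → B) (g : PowerSeries A) : MvPowerSeries (Fin 2) B :=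
  fun m => if m 1 = 0 then f (PowerSeries.coeff (R := A) (m 0) g) else 0

/-- Regard a one-variable series as a two-variable series in the second variable `1⊗x`,
mapping its coefficients by `f`. -/
def inVar1 (f : A → B) (g : PowerSeries A) : MvPowerSeries (Fin 2) B :=
  fun m => if m 0 = 0 then f (PowerSeries.coeff (R := A) (m 1) g) else 0

/-- Formal partial derivative of a multivariate power series with respect to the `i`-th
variable. -/
def pderiv (i : σ) (F : MvPowerSeries σ A) : MvPowerSeries σ A :=
  fun m => ((m i + 1 : ℕ) : A) * F (m + Finsupp.single i 1)

variable (R : Type*) [CommRing R] (H : Type*) [CommRing H] [HopfAlgebra R H]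

/-- `id ⊗ ε : H ⊗ H → H`. -/
def idCounit : H ⊗[R] H →ₗ[R] H :=
  (TensorProduct.rid R H).toLinearMap ∘ₗ
    LinearMap.lTensor H (Coalgebra.counit (R := R) (A := H))

/-- `ε ⊗ id : H ⊗ H → H`. -/
def counitId : H ⊗[R] H →ₗ[R] H :=
  (TensorProduct.lid R H).toLinearMap ∘ₗ
    LinearMap.rTensor H (Coalgebra.counit (R := R) (A := H))

/-- `Δ ⊗ id : H ⊗ H → H ⊗ H ⊗ H` (with the rightmost association). -/
def comulLeftTensor : H ⊗[R] H →ₗ[R] H ⊗[R] (H ⊗[R] H) :=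
  (TensorProduct.assoc R H H H).toLinearMap ∘ₗ
    LinearMap.rTensor H (Coalgebra.comul (R := R) (A := H))

/-- `id ⊗ Δ : H ⊗ H → H ⊗ H ⊗ H`. -/
def idTensorComul : H ⊗[R] H →ₗ[R] H ⊗[R] (H ⊗[R] H) :=
  LinearMap.lTensor H (Coalgebra.comul (R := R) (A := H))

/-- `a ↦ a ⊗ 1 : H ⊗ H → H ⊗ H ⊗ H`. -/
def incl12 : H ⊗[R] H →ₗ[R] H ⊗[R] (H ⊗[R] H) :=
  LinearMap.lTensor H ((TensorProduct.mk R H H).flip 1)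

/-- `a ↦ 1 ⊗ a : H ⊗ H → H ⊗ H ⊗ H`. -/
def incl23 : H ⊗[R] H →ₗ[R] H ⊗[R] (H ⊗[R] H) :=
  TensorProduct.mk R H (H ⊗[R] H) 1

/-- The flip `τ` of the two tensor factors of `H ⊗ H`. -/
def tau : H ⊗[R] H →ₗ[R] H ⊗[R] H := (TensorProduct.comm R H H).toLinearMap

/-- The unit axiom for a formal group `F` over the Hopf algebra `H`: applying `id ⊗ ε`
to all coefficients and setting the second variable to `0` yields the series `x`, and
symmetrically. -/
def UnitAxiom (F : MvPowerSeries (Fin 2) (H ⊗[R] H)) : Prop :=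
  (∀ n : ℕ, idCounit R H (F (Finsupp.single 0 n)) = if n = 1 then 1 else 0) ∧
  (∀ n : ℕ, counitId R H (F (Finsupp.single 1 n)) = if n = 1 then 1 else 0)

/-- The associativity axiom for a formal group `F` over the Hopf algebra `H`:
`((Δ ⊗ id)F)(F(x⊗1,1⊗x) ⊗ 1, 1⊗1⊗x) = ((id ⊗ Δ)F)(x⊗1⊗1, 1 ⊗ F(x⊗1,1⊗x))`. -/
def AssocAxiom (F : MvPowerSeries (Fin 2) (H ⊗[R] H)) : Prop :=
  subst2 (mapCoeffs (comulLeftTensor R H) F) (emb12 (incl12 R H) F)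
      (MvPowerSeries.X 2) =
  subst2 (mapCoeffs (idTensorComul R H) F) (MvPowerSeries.X 0)
      (emb23 (incl23 R H) F)

/-- The commutativity axiom: `F` is symmetric, `A_{i,j} = τ(A_{j,i})`. -/
def CommAxiom (F : MvPowerSeries (Fin 2) (H ⊗[R] H)) : Prop :=
  ∀ m : Fin 2 →₀ ℕ,
    F m = tau R H (F (Finsupp.single 0 (m 1) + Finsupp.single 1 (m 0)))

/-- A commutative formal group over the Hopf algebra `H`: a two-variable power series
with coefficients in `H ⊗ H`, with zero constant term, satisfying the unit,
associativity and commutativity axioms. -/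
def IsCommFormalGroup (F : MvPowerSeries (Fin 2) (H ⊗[R] H)) : Prop :=
  F 0 = 0 ∧ UnitAxiom R H F ∧ AssocAxiom R H F ∧ CommAxiom R H F

/-!
Take the coefficient of `x^{m₀} y^{m₁} z` in the associativity axiom and apply `id ⊗ id ⊗ ε`
to it, which removes the third tensor factor. On the left, only the linear term in `z` of
`((Δ ⊗ id)𝔉)(𝔉(x, y) ⊗ 1, z)` survives, and it is `Σ_p Δ((id ⊗ ε)A_{p,1}) 𝔉^p = (Δω̃)(𝔉)`.
On the right, `f = (id ⊗ ε)𝔉` satisfies `f(y, 0) = y` by the unit axiom and `∂f/∂z(y, 0) = ω̃(y)`,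
so by the chain rule the `z`-linear coefficient of `f(y, z)^q` is `q y^{q-1} ω̃(y)`; summing
against the `A_{m₀,q}` gives the coefficient of `∂𝔉/∂y · (1 ⊗ ω̃)(y)`.
-/

section PowerSeries

open MvPowerSeries Finsupp Finset

variable {A B : Type*} [CommRing A] [CommRing B] {σ : Type*}

theorem coeff_mapCoeffs (f : A → B) (F : MvPowerSeries σ A) (d : σ →₀ ℕ) :
    coeff d (mapCoeffs f F) = f (coeff d F) :=
  rfl

theorem powerSeries_coeff_mapCoeffs (f : A → B) (w : PowerSeries A) (n : ℕ) :
    PowerSeries.coeff n (mapCoeffs f w) = f (PowerSeries.coeff n w) :=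
  rfl

theorem coeff_pow_eq_zero_of_degree_lt {G : MvPowerSeries σ A} (hG : constantCoeff G = 0)
    {d : σ →₀ ℕ} {n : ℕ} (h : d.degree < n) : coeff d (G ^ n) = 0 :=
  coeff_of_lt_order ((Nat.cast_lt.mpr h).trans_le (le_order_pow_of_constantCoeff_eq_zero n hG))

theorem coeff_subst1_eq_sum (w : PowerSeries A) {G : MvPowerSeries σ A}
    (hG : constantCoeff G = 0) (d : σ →₀ ℕ) :
    coeff d (subst1 w G) =
      ∑ n ∈ range (d.degree + 1), PowerSeries.coeff n w * coeff d (G ^ n) := by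
  refine finsum_eq_sum_of_support_subset _ fun n hn => ?_
  rw [coe_range, Set.mem_Iio, Nat.lt_succ_iff]
  by_contra! h
  exact hn (by simp [coeff_pow_eq_zero_of_degree_lt hG h])

theorem emb12_eq_rename (f : A →+* B) (F : MvPowerSeries (Fin 2) A) :
    emb12 f F = rename Fin.castSuccEmb (map f F) := by
  ext d
  by_cases hd : d 2 = 0
  · have : d = embDomain Fin.castSuccEmb (single 0 (d 0) + single 1 (d 1)) := by
      ext i; fin_cases i <;> simp [hd]
    rw [this, coeff_embDomain_rename, coeff_map]
    simp [emb12, coeff_apply]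
  · rw [coeff_rename_eq_zero]
    · simp [emb12, coeff_apply, hd]
    · rintro ⟨y, rfl⟩
      exact hd (mapDomain_of_notMem_range _ _ (by simp))

theorem emb23_eq_rename (f : A →+* B) (F : MvPowerSeries (Fin 2) A) :
    emb23 f F = rename (Fin.succEmb 2) (map f F) := by
  ext d
  by_cases hd : d 0 = 0
  · have : d = embDomain (Fin.succEmb 2) (single 0 (d 1) + single 1 (d 2)) := by
      ext i; fin_cases i <;> simp [hd]
    rw [this, coeff_embDomain_rename, coeff_map]
    simp [emb23, coeff_apply]
  · rw [coeff_rename_eq_zero]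
    · simp [emb23, coeff_apply, hd]
    · rintro ⟨y, rfl⟩
      exact hd (mapDomain_of_notMem_range _ _ (by simp))

theorem emb12_pow (f : A →+* B) (F : MvPowerSeries (Fin 2) A) (n : ℕ) :
    emb12 f F ^ n = emb12 f (F ^ n) := by
  rw [emb12_eq_rename, emb12_eq_rename, map_pow, map_pow]

theorem emb23_pow (f : A →+* B) (F : MvPowerSeries (Fin 2) A) (n : ℕ) :
    emb23 f F ^ n = emb23 f (F ^ n) := by
  rw [emb23_eq_rename, emb23_eq_rename, map_pow, map_pow]

theorem coeff_emb12_pow_mul_X_two_pow (f : A →+* B) (F : MvPowerSeries (Fin 2) A)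
    (m : Fin 2 →₀ ℕ) (p q : ℕ) :
    coeff (single 0 (m 0) + single 1 (m 1) + single 2 1) (emb12 f F ^ p * X 2 ^ q) =
      if q = 1 then f (coeff m (F ^ p)) else 0 := by
  rw [emb12_pow, X_pow_eq, coeff_mul_monomial, mul_one]
  rcases Nat.lt_trichotomy q 1 with hq | rfl | hq
  · obtain rfl : q = 0 := by omega
    simp [emb12, coeff_apply]
  · have hm : single 0 (m 0) + single 1 (m 1) = m := by ext i; fin_cases i <;> simp
    simp [emb12, coeff_apply, hm]
  · rw [if_neg (by simpa [single_le_iff] using hq), if_neg hq.ne']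

theorem coeff_X_zero_pow_mul_emb23_pow (f : A →+* B) (F : MvPowerSeries (Fin 2) A)
    (m : Fin 2 →₀ ℕ) (p q : ℕ) :
    coeff (single 0 (m 0) + single 1 (m 1) + single 2 1) (X 0 ^ p * emb23 f F ^ q) =
      if p = m 0 then f (coeff (single 0 (m 1) + single 1 1) (F ^ q)) else 0 := by
  rw [emb23_pow, X_pow_eq, coeff_monomial_mul, one_mul]
  by_cases hp : p ≤ m 0
  · rw [if_pos (by simpa [single_le_iff] using hp)]
    by_cases hpm : p = m 0
    · simp [emb23, coeff_apply, hpm]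
    · have hp0 : m 0 - p ≠ 0 := by omega
      simp [emb23, coeff_apply, hpm, hp0]
  · rw [if_neg (by simpa [single_le_iff] using hp), if_neg (by omega)]

theorem coeff_subst2_emb12_X_two (w : MvPowerSeries (Fin 2) B) (f : A →+* B)
    {F : MvPowerSeries (Fin 2) A} (hF : constantCoeff F = 0) (m : Fin 2 →₀ ℕ) :
    coeff (single 0 (m 0) + single 1 (m 1) + single 2 1) (subst2 w (emb12 f F) (X 2)) =
      ∑ p ∈ range (m.degree + 1), coeff (single 0 p + single 1 1) w * f (coeff m (F ^ p)) := by
  rw [coeff_apply]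
  simp only [subst2, coeff_emb12_pow_mul_X_two_pow]
  rw [finsum_eq_sum_of_support_subset (s := range (m.degree + 1) ×ˢ {1}), sum_product]
  · simp
  · rintro ⟨p, q⟩ hpq
    obtain rfl : q = 1 := by by_contra hq; simp [hq] at hpq
    simp only [coe_product, coe_range, coe_singleton, Set.mem_prod, Set.mem_Iio,
      Set.mem_singleton_iff, and_true, Nat.lt_succ_iff]
    by_contra! h
    simp [coeff_pow_eq_zero_of_degree_lt hF h] at hpq

theorem coeff_subst2_X_zero_emb23 (w : MvPowerSeries (Fin 2) B) (f : A →+* B)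
    {F : MvPowerSeries (Fin 2) A} (hF : constantCoeff F = 0) (m : Fin 2 →₀ ℕ) :
    coeff (single 0 (m 0) + single 1 (m 1) + single 2 1) (subst2 w (X 0) (emb23 f F)) =
      ∑ q ∈ range (m 1 + 2), coeff (single 0 (m 0) + single 1 q) w *
        f (coeff (single 0 (m 1) + single 1 1) (F ^ q)) := by
  rw [coeff_apply]
  simp only [subst2, coeff_X_zero_pow_mul_emb23_pow]
  rw [finsum_eq_sum_of_support_subset (s := {m 0} ×ˢ range (m 1 + 2)), sum_product]
  · simp
  · rintro ⟨p, q⟩ hpq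
    obtain rfl : p = m 0 := by by_contra hp; simp [hp] at hpq
    simp only [coe_product, coe_range, coe_singleton, Set.mem_prod, Set.mem_Iio,
      Set.mem_singleton_iff, true_and]
    by_contra! h
    have hdeg : (single 0 (m 1) + single 1 1 : Fin 2 →₀ ℕ).degree < q := by
      simp only [map_add, degree_single]; omega
    simp [coeff_pow_eq_zero_of_degree_lt hF hdeg] at hpq

/-- `killCompl (Function.Embedding.punit 0)` sets the second variable to zero, so this is the
chain rule `∂(gⁿ)/∂X₁ = n gⁿ⁻¹ ∂g/∂X₁` evaluated at `X₁ = 0`. -/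
theorem coeff_single_zero_single_one_pow (g : MvPowerSeries (Fin 2) A) (n b : ℕ) :
    coeff (single 0 b + single 1 1) (g ^ n) =
      n * PowerSeries.coeff b (killCompl (Function.Embedding.punit 0) g ^ (n - 1) *
        killCompl (Function.Embedding.punit 0) (MvPowerSeries.pderiv A 1 g)) := by
  have hcoeff : ∀ h : MvPowerSeries (Fin 2) A, coeff (single 0 b + single 1 1) h =
      PowerSeries.coeff b
        (killCompl (Function.Embedding.punit 0) (MvPowerSeries.pderiv A 1 h)) := by
    intro h
    rw [PowerSeries.coeff, coeff_killCompl, coeff_pderiv]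
    simp [Function.Embedding.punit]
  rw [hcoeff, pderiv_pow, map_mul (killCompl _), map_mul (killCompl _), map_natCast, map_pow,
    mul_assoc, ← map_natCast PowerSeries.C, PowerSeries.coeff_C_mul]

theorem coeff_mul_inVar1 (P : MvPowerSeries (Fin 2) B) (g : A → B) (ω : PowerSeries A)
    (m : Fin 2 →₀ ℕ) :
    coeff m (P * inVar1 g ω) = ∑ j ∈ antidiagonal (m 1),
      coeff (single 0 (m 0) + single 1 j.1) P * g (PowerSeries.coeff j.2 ω) := by
  let ι : ℕ × ℕ → (Fin 2 →₀ ℕ) × (Fin 2 →₀ ℕ) :=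
    fun j => (single 0 (m 0) + single 1 j.1, single 1 j.2)
  have hterm : ∀ j : ℕ × ℕ,
      coeff (single 0 (m 0) + single 1 j.1) P * g (PowerSeries.coeff j.2 ω) =
        coeff (ι j).1 P * coeff (ι j).2 (inVar1 g ω) := by
    intro j; simp [ι, inVar1, coeff_apply]
  rw [coeff_mul]
  symm
  refine sum_bij_ne_zero (fun j _ _ => ι j) ?_ ?_ ?_ fun j _ _ => hterm j
  · rintro ⟨j, k⟩ hjk -
    rw [HasAntidiagonal.mem_antidiagonal] at hjk ⊢
    ext i; fin_cases i <;> simp [ι, ← hjk]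
  · rintro ⟨j, k⟩ - - ⟨j', k'⟩ - - h
    simp only [ι, Prod.mk.injEq, add_right_inj] at h
    rw [single_injective _ h.1, single_injective _ h.2]
  · rintro ⟨a, b⟩ hab hne
    rw [HasAntidiagonal.mem_antidiagonal] at hab
    have hb : b 0 = 0 := by by_contra hb; simp [inVar1, coeff_apply, hb] at hne
    have ha : a 0 = m 0 := by rw [← hab]; simp [hb]
    have hι : ι (a 1, b 1) = (a, b) := by
      simp only [ι, Prod.mk.injEq]
      constructor <;> ext i <;> fin_cases i <;> simp [ha, hb]
    exact ⟨(a 1, b 1), by simp [← hab], by rwa [hterm, hι], hι⟩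

theorem coeff_pderiv_one (F : MvPowerSeries (Fin 2) A) (a b : ℕ) :
    coeff (single 0 a + single 1 b) (pderiv 1 F) =
      ((b + 1 : ℕ) : A) * coeff (single 0 a + single 1 (b + 1)) F := by
  simp [coeff_apply, pderiv, add_assoc, ← single_add]

theorem sum_range_mul_natCast_mul_coeff_X_pow_mul (a : ℕ → B) (ι : A →+* B)
    (ω : PowerSeries A) (b : ℕ) :
    ∑ q ∈ range (b + 2), a q * ι (q * PowerSeries.coeff b (PowerSeries.X ^ (q - 1) * ω)) =
      ∑ j ∈ antidiagonal b, ((j.1 + 1 : ℕ) : B) * a (j.1 + 1) * ι (PowerSeries.coeff j.2 ω) := by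
  rw [Nat.sum_antidiagonal_eq_sum_range_succ_mk, sum_range_succ']
  simp only [Nat.cast_zero, zero_mul, map_zero, mul_zero, add_zero, add_tsub_cancel_right]
  refine sum_congr rfl fun j hj => ?_
  rw [PowerSeries.coeff_X_pow_mul', if_pos (by simpa [Nat.lt_succ_iff] using hj), map_mul,
    map_natCast]
  ring

end PowerSeries

section Hopf

open TensorProduct

variable (R : Type*) [CommRing R] (H : Type*) [CommRing H] [HopfAlgebra R H]

def idCounitAlgHom : H ⊗[R] H →ₐ[R] H :=
  (Algebra.TensorProduct.rid R R H).toAlgHom.comp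
    (Algebra.TensorProduct.map (AlgHom.id R H) (Bialgebra.counitAlgHom R H))

theorem idCounitAlgHom_apply (x : H ⊗[R] H) : idCounitAlgHom R H x = idCounit R H x := by
  have : (idCounitAlgHom R H).toLinearMap = idCounit R H :=
    TensorProduct.ext' fun a b => by simp [idCounitAlgHom, idCounit]
  exact LinearMap.congr_fun this x

theorem idCounit_comul (b : H) : idCounit R H (Coalgebra.comul b) = b := by
  simp [idCounit, Coalgebra.lTensor_counit_comul]

def idIdCounit : H ⊗[R] (H ⊗[R] H) →ₐ[R] H ⊗[R] H :=
  Algebra.TensorProduct.map (AlgHom.id R H) (idCounitAlgHom R H)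

theorem idIdCounit_tmul (a : H) (x : H ⊗[R] H) :
    idIdCounit R H (a ⊗ₜ x) = a ⊗ₜ idCounit R H x := by
  simp [idIdCounit, idCounitAlgHom_apply]

theorem idIdCounit_assoc_tmul (c : H ⊗[R] H) (b : H) :
    idIdCounit R H (TensorProduct.assoc R H H H (c ⊗ₜ b)) = Coalgebra.counit (R := R) b • c := by
  induction c using TensorProduct.induction_on with
  | zero => simp
  | tmul x y => simp [idIdCounit_tmul, idCounit]
  | add c d hc hd => simp [add_tmul, hc, hd]

theorem idIdCounit_comulLeftTensor (x : H ⊗[R] H) :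
    idIdCounit R H (comulLeftTensor R H x) = Coalgebra.comul (idCounit R H x) := by
  have : (idIdCounit R H).toLinearMap ∘ₗ comulLeftTensor R H =
      Coalgebra.comul ∘ₗ idCounit R H :=
    TensorProduct.ext' fun a b => by
      simp [comulLeftTensor, idCounit, idIdCounit_assoc_tmul]
  exact LinearMap.congr_fun this x

theorem idIdCounit_idTensorComul (x : H ⊗[R] H) :
    idIdCounit R H (idTensorComul R H x) = x := by
  have : (idIdCounit R H).toLinearMap ∘ₗ idTensorComul R H = LinearMap.id :=
    TensorProduct.ext' fun a b => by simp [idTensorComul, idIdCounit_tmul, idCounit_comul]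
  exact LinearMap.congr_fun this x

theorem idIdCounit_incl12 (x : H ⊗[R] H) : idIdCounit R H (incl12 R H x) = x := by
  have : (idIdCounit R H).toLinearMap ∘ₗ incl12 R H = LinearMap.id :=
    TensorProduct.ext' fun a b => by simp [incl12, idIdCounit_tmul, idCounit]
  exact LinearMap.congr_fun this x

theorem idIdCounit_incl23 (x : H ⊗[R] H) :
    idIdCounit R H (incl23 R H x) = 1 ⊗ₜ idCounit R H x :=
  idIdCounit_tmul R H 1 x

theorem coe_incl12 : ⇑(incl12 R H) =
    ⇑((Algebra.TensorProduct.map (AlgHom.id R H) Algebra.TensorProduct.includeLeft :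
      H ⊗[R] H →ₐ[R] H ⊗[R] (H ⊗[R] H)) : H ⊗[R] H →+* H ⊗[R] (H ⊗[R] H)) := by
  have : incl12 R H =
      (Algebra.TensorProduct.map (AlgHom.id R H) Algebra.TensorProduct.includeLeft).toLinearMap :=
    TensorProduct.ext' fun a b => by simp [incl12]
  rw [this]; rfl

theorem coe_incl23 : ⇑(incl23 R H) =
    ⇑((Algebra.TensorProduct.includeRight : H ⊗[R] H →ₐ[R] H ⊗[R] (H ⊗[R] H)) :
      H ⊗[R] H →+* H ⊗[R] (H ⊗[R] H)) :=
  rfl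

end Hopf

section FormalGroup

open MvPowerSeries Finsupp

variable {R : Type*} [CommRing R] {H : Type*} [CommRing H] [HopfAlgebra R H]
  {F : MvPowerSeries (Fin 2) (H ⊗[R] H)}

theorem killCompl_map_idCounitAlgHom (hF : UnitAxiom R H F) :
    killCompl (Function.Embedding.punit 0) (map (idCounitAlgHom R H : H ⊗[R] H →+* H) F) =
      PowerSeries.X := by
  refine PowerSeries.ext fun n => ?_
  rw [PowerSeries.coeff_X, PowerSeries.coeff, coeff_killCompl, coeff_map]
  simpa [Function.Embedding.punit, idCounitAlgHom_apply, coeff_apply] using hF.1 n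

theorem killCompl_pderiv_map_idCounitAlgHom :
    killCompl (Function.Embedding.punit 0)
        (MvPowerSeries.pderiv H 1 (map (idCounitAlgHom R H : H ⊗[R] H →+* H) F)) =
      PowerSeries.mk fun n => idCounit R H (F (single 0 n + single 1 1)) := by
  refine PowerSeries.ext fun n => ?_
  rw [PowerSeries.coeff_mk, PowerSeries.coeff, coeff_killCompl, coeff_pderiv, coeff_map]
  simp [Function.Embedding.punit, idCounitAlgHom_apply, coeff_apply]

theorem idCounit_coeff_pow_single_one (hF : UnitAxiom R H F) {ω : PowerSeries H}
    (hω : ω = PowerSeries.mk fun n => idCounit R H (F (single 0 n + single 1 1))) (q b : ℕ) :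
    idCounit R H (coeff (single 0 b + single 1 1) (F ^ q)) =
      q * PowerSeries.coeff b (PowerSeries.X ^ (q - 1) * ω) := by
  have : idCounit R H (coeff (single 0 b + single 1 1) (F ^ q)) =
      coeff (single 0 b + single 1 1) (map (idCounitAlgHom R H : H ⊗[R] H →+* H) F ^ q) := by
    rw [← map_pow, coeff_map]; exact (idCounitAlgHom_apply ..).symm
  rw [this, coeff_single_zero_single_one_pow, killCompl_map_idCounitAlgHom hF,
    killCompl_pderiv_map_idCounitAlgHom, hω]

/-- The coefficient of `x^{m₀} y^{m₁} z` in the associativity axiom, after `id ⊗ id ⊗ ε`. -/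
theorem AssocAxiom.sum_comul_mul_eq_sum_mul_tmul (hassoc : AssocAxiom R H F) (hF0 : F 0 = 0)
    (m : Fin 2 →₀ ℕ) :
    ∑ p ∈ Finset.range (m.degree + 1),
        Coalgebra.comul (idCounit R H (coeff (single 0 p + single 1 1) F)) * coeff m (F ^ p) =
      ∑ q ∈ Finset.range (m 1 + 2), coeff (single 0 (m 0) + single 1 q) F *
        (1 ⊗ₜ idCounit R H (coeff (single 0 (m 1) + single 1 1) (F ^ q))) := by
  have key := congrArg (idIdCounit R H)
    (congrArg (coeff (single 0 (m 0) + single 1 (m 1) + single 2 1)) hassoc)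
  rw [coe_incl12, coe_incl23, coeff_subst2_emb12_X_two _ _ hF0,
    coeff_subst2_X_zero_emb23 _ _ hF0, ← coe_incl12, ← coe_incl23, map_sum, map_sum] at key
  simpa only [map_mul, coeff_mapCoeffs, idIdCounit_comulLeftTensor, idIdCounit_incl12,
    idIdCounit_idTensorComul, idIdCounit_incl23] using key

end FormalGroup

theorem stmt4_general
    (R : Type*) [CommRing R]
    (H : Type*) [CommRing H] [HopfAlgebra R H]
    (F : MvPowerSeries (Fin 2) (H ⊗[R] H)) (hF : IsCommFormalGroup R H F)
    (ω : PowerSeries H)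
    (hω : ω = PowerSeries.mk fun n =>
      idCounit R H (F (Finsupp.single 0 n + Finsupp.single 1 1))) :
    subst1 (mapCoeffs (⇑(Coalgebra.comul (R := R) (A := H))) ω) F =
      pderiv 1 F * inVar1 (fun b => (1 : H) ⊗ₜ[R] b) ω := by
  obtain ⟨hF0, hunit, hassoc, -⟩ := hF
  ext m
  have key := hassoc.sum_comul_mul_eq_sum_mul_tmul hF0 m
  simp only [idCounit_coeff_pow_single_one hunit hω] at key
  rw [coeff_subst1_eq_sum _ hF0, coeff_mul_inVar1]
  simp only [coeff_pderiv_one]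
  convert key using 1
  · refine Finset.sum_congr rfl fun n _ => ?_
    rw [powerSeries_coeff_mapCoeffs, hω, PowerSeries.coeff_mk]
    rfl
  · exact (sum_range_mul_natCast_mul_coeff_X_pow_mul
      (fun q => MvPowerSeries.coeff (Finsupp.single 0 (m 0) + Finsupp.single 1 q) F)
      (Algebra.TensorProduct.includeRight : H →ₐ[R] H ⊗[R] H) ω (m 1)).symm

/-- for a commutative formal group `𝔉` over `H` and
`ω̃(x) = (id⊗ε̃)(∂𝔉/∂z)`, one has
`(Δω̃)(𝔉(x⊗1,1⊗x)) = ∂𝔉/∂(1⊗x) · (1⊗ω̃)(1⊗x)`. -/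
theorem stmt4
    (R : Type*) [CommRing R] [NoZeroSMulDivisors ℤ R]
    (H : Type*) [CommRing H] [HopfAlgebra R H]
    (F : MvPowerSeries (Fin 2) (H ⊗[R] H)) (hF : IsCommFormalGroup R H F)
    (ω : PowerSeries H)
    (hω : ω = PowerSeries.mk fun n =>
      idCounit R H (F (Finsupp.single 0 n + Finsupp.single 1 1))) :
    subst1 (mapCoeffs (⇑(Coalgebra.comul (R := R) (A := H))) ω) F =
      pderiv 1 F * inVar1 (fun b => (1 : H) ⊗ₜ[R] b) ω :=
  stmt4_general R H F hF ω hω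

end FGHopf
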